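/- Let Σ be a triangulation in ℝⁿ and let C, D be Σ-definable polyhedra (unions of face-closed subsets of Σ). Then cl(C \ D) is again a Σ-definable polyhedron; consequently the Σ-definable polyhedra form a co-Heyting subalgebra of the co-Heyting algebra of closed subsets of |Σ|. -/

import Mathlib

open Set

/-- A polytope in ℝⁿ: the convex hull of a finite set of points. -/
def IsPolytope {n : ℕ} (s : Set (Fin n → ℝ)) : Prop :=
  ∃ V : Finset (Fin n → ℝ), s = convexHull ℝ (V : Set (Fin n → ℝ))

/-- A polyhedron in ℝⁿ: a finite union of polytopes. -/
def IsPolyhedron {n : ℕ} (P : Set (Fin n → ℝ)) : Prop :=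
  ∃ S : Set (Set (Fin n → ℝ)), S.Finite ∧ (∀ s ∈ S, IsPolytope s) ∧ P = ⋃₀ S

/-- A simplex in ℝⁿ: the convex hull of a nonempty finite affinely independent set. -/
def IsSimplex {n : ℕ} (s : Set (Fin n → ℝ)) : Prop :=
  ∃ V : Finset (Fin n → ℝ), V.Nonempty ∧
    AffineIndependent ℝ (fun x : {x : Fin n → ℝ // x ∈ V} => x.val) ∧
    s = convexHull ℝ (V : Set (Fin n → ℝ))

/-- `IsFaceOf s t`: `t` is a simplex with vertex set `W` and `s` is the convex hull
of a nonempty subset of `W`. -/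
def IsFaceOf {n : ℕ} (s t : Set (Fin n → ℝ)) : Prop :=
  ∃ W V : Finset (Fin n → ℝ), W.Nonempty ∧
    AffineIndependent ℝ (fun x : {x : Fin n → ℝ // x ∈ W} => x.val) ∧
    t = convexHull ℝ (W : Set (Fin n → ℝ)) ∧
    V.Nonempty ∧ V ⊆ W ∧ s = convexHull ℝ (V : Set (Fin n → ℝ))

/-- A triangulation in ℝⁿ: a finite set of simplices closed under taking faces, such that
any two members intersect in a common face (or not at all). -/
structure IsTriangulation {n : ℕ} (K : Set (Set (Fin n → ℝ))) : Prop where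
  finite : K.Finite
  simplex : ∀ s ∈ K, IsSimplex s
  face_mem : ∀ s ∈ K, ∀ t, IsFaceOf t s → t ∈ K
  inter : ∀ s ∈ K, ∀ t ∈ K, s ∩ t = ∅ ∨ (IsFaceOf (s ∩ t) s ∧ IsFaceOf (s ∩ t) t)

/-- A set of simplices closed under taking faces. -/
def FaceClosed {n : ℕ} (D : Set (Set (Fin n → ℝ))) : Prop :=
  ∀ s ∈ D, ∀ t, IsFaceOf t s → t ∈ D

/-- A `K`-definable polyhedron: the union of a face-closed subset of `K`. -/
def SigmaDefinable {n : ℕ} (K : Set (Set (Fin n → ℝ))) (C : Set (Fin n → ℝ)) : Prop :=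
  ∃ D ⊆ K, FaceClosed D ∧ C = ⋃₀ D

/-- A `K`-definable open set: the complement in `|K| = ⋃₀ K` of a `K`-definable polyhedron. -/
def SigmaDefOpen {n : ℕ} (K : Set (Set (Fin n → ℝ))) (O : Set (Fin n → ℝ)) : Prop :=
  ∃ C, SigmaDefinable K C ∧ O = ⋃₀ K \ C

/-- The open star of a simplex `s` in a triangulation `K`. -/
def openStar {n : ℕ} (K : Set (Set (Fin n → ℝ))) (s : Set (Fin n → ℝ)) : Set (Fin n → ℝ) :=
  ⋃ t ∈ {t ∈ K | s ⊆ t}, intrinsicInterior ℝ t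

/-- The interior of `S` in the subspace topology of `P`, viewed as a subset of ℝⁿ. -/
def intSub {n : ℕ} (P S : Set (Fin n → ℝ)) : Set (Fin n → ℝ) :=
  Subtype.val '' interior (Subtype.val ⁻¹' S : Set P)

/-- An open subpolyhedron of a polyhedron `P`: a subset of `P` whose complement in `P`
is a polyhedron. -/
def IsOpenSubpoly {n : ℕ} (P O : Set (Fin n → ℝ)) : Prop :=
  O ⊆ P ∧ IsPolyhedron (P \ O)

/-- `s` is a simplex with exactly `k` (affinely independent) vertices. -/
def SimplexWithCard {n : ℕ} (s : Set (Fin n → ℝ)) (k : ℕ) : Prop :=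
  ∃ V : Finset (Fin n → ℝ), V.Nonempty ∧
    AffineIndependent ℝ (fun x : {x : Fin n → ℝ // x ∈ V} => x.val) ∧
    s = convexHull ℝ (V : Set (Fin n → ℝ)) ∧ V.card = k

/-- `P` contains a simplex with `d+1` affinely independent vertices, and no simplex with more;
i.e. the polyhedron `P` has dimension exactly `d`. -/
def PolyDimEq {n : ℕ} (P : Set (Fin n → ℝ)) (d : ℕ) : Prop :=
  (∃ V : Finset (Fin n → ℝ), V.Nonempty ∧
      AffineIndependent ℝ (fun x : {x : Fin n → ℝ // x ∈ V} => x.val) ∧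
      convexHull ℝ (V : Set (Fin n → ℝ)) ⊆ P ∧ V.card = d + 1) ∧
  (∀ V : Finset (Fin n → ℝ),
      AffineIndependent ℝ (fun x : {x : Fin n → ℝ // x ∈ V} => x.val) →
      convexHull ℝ (V : Set (Fin n → ℝ)) ⊆ P → V.card ≤ d + 1)

/-- The polyhedron `P` has dimension at most `d`. -/
def PolyDimLE {n : ℕ} (P : Set (Fin n → ℝ)) (d : ℕ) : Prop :=
  ∀ V : Finset (Fin n → ℝ),
    AffineIndependent ℝ (fun x : {x : Fin n → ℝ // x ∈ V} => x.val) →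
    convexHull ℝ (V : Set (Fin n → ℝ)) ⊆ P → V.card ≤ d + 1

/-- The triangulation `K` has combinatorial dimension exactly `d`. -/
def TriangDimEq {n : ℕ} (K : Set (Set (Fin n → ℝ))) (d : ℕ) : Prop :=
  (∃ s ∈ K, SimplexWithCard s (d + 1)) ∧
  (∀ s ∈ K, ∀ k, SimplexWithCard s k → k ≤ d + 1)

/-- The bounded-depth terms: `bdTerm P k V = V k ∪ (V k ⇨ bdTerm P (k-1) V)`,
where `U ⇨ W = int_P ((P \ U) ∪ W)` is the Heyting implication of open subsets of `P`. -/
def bdTerm {n : ℕ} (P : Set (Fin n → ℝ)) :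
    (k : ℕ) → (Fin (k + 1) → Set (Fin n → ℝ)) → Set (Fin n → ℝ)
  | 0, V => V 0 ∪ intSub P (P \ V 0)
  | k + 1, V => V (Fin.last (k + 1)) ∪
      intSub P ((P \ V (Fin.last (k + 1))) ∪ bdTerm P k (fun i => V i.castSucc))

/-- The finite poset `A` has depth exactly `d`: it has a chain of cardinality `d+1`
and no longer chain. -/
def depthEq (A : Type) [PartialOrder A] (d : ℕ) : Prop :=
  (∃ C : Finset A, IsChain (· ≤ ·) (C : Set A) ∧ C.card = d + 1) ∧
  (∀ C : Finset A, IsChain (· ≤ ·) (C : Set A) → C.card ≤ d + 1)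

/-- An upper set of the poset `(K, ⊆)`. -/
def UpperSetOf {n : ℕ} (K U : Set (Set (Fin n → ℝ))) : Prop :=
  U ⊆ K ∧ ∀ s ∈ U, ∀ t ∈ K, s ⊆ t → t ∈ U

/-- The map sending an upper set of a triangulation to the union of the relative
interiors of its members. -/
def gammaUp {n : ℕ} (U : Set (Set (Fin n → ℝ))) : Set (Fin n → ℝ) :=
  ⋃ s ∈ U, intrinsicInterior ℝ s

/-!
Write `C` and `D` as unions of families `S` and `T` of simplices of `K`. Then `cl (C \ D)` is
the union of those `s ∈ S` not contained in `⋃₀ T`: this union is closed and contains `C \ D`,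
and for such an `s` every `t ∈ T` meets `s` in a proper face, so `s \ ⋃₀ T` is the complement in
`s` of finitely many nowhere dense closed sets and hence dense in `s`. Finally any union of
simplices of `K` is `K`-definable, being the union of all the simplices of `K` it contains.
-/

section Convex
variable {𝕜 E : Type*} [Ring 𝕜] [AddCommGroup E] [Module 𝕜 E]

theorem AffineIndependent.weight_eq_zero_of_sum_smul_mem_affineSpan
    {s t : Finset E} (hs : AffineIndependent 𝕜 ((↑) : s → E)) (hts : t ⊆ s) {w : E → 𝕜}
    (hw : ∑ y ∈ s, w y = 1) (hmem : ∑ y ∈ s, w y • y ∈ affineSpan 𝕜 (t : Set E))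
    {u : E} (hus : u ∈ s) (hut : u ∉ t) : w u = 0 := by
  have hw' : ∑ i : s, w i = 1 := by rwa [Finset.sum_coe_sort s w]
  have himage : ((↑) : s → E) '' {i | (i : E) ∈ t} = t := by
    ext y
    exact ⟨fun ⟨i, hi, hiy⟩ => hiy ▸ hi, fun hy => ⟨⟨y, hts hy⟩, hy, rfl⟩⟩
  refine hs.eq_zero_of_affineCombination_mem_affineSpan (i := ⟨u, hus⟩)
    (s := {i | (i : E) ∈ t}) hw' ?_ (Finset.mem_univ _) hut
  rwa [Finset.univ.affineCombination_eq_linear_combination _ _ hw', himage,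
    Finset.sum_coe_sort s fun y => w y • y]

end Convex

section Topology
variable {E : Type*} [AddCommGroup E] [Module ℝ E] [TopologicalSpace E] [ContinuousAdd E]
  [ContinuousSMul ℝ E]

theorem AffineIndependent.convexHull_subset_closure_convexHull_sdiff {W V : Finset E}
    (hW : AffineIndependent ℝ ((↑) : W → E)) (hVW : V ⊆ W) (hne : V ≠ W) :
    convexHull ℝ (W : Set E) ⊆ closure (convexHull ℝ (W : Set E) \ convexHull ℝ (V : Set E)) := by
  obtain ⟨u, huW, huV⟩ := Finset.exists_of_ssubset (hVW.ssubset_of_ne hne)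
  intro x hx
  refine closure_mono ?_ (segment_subset_closure_openSegment (left_mem_segment ℝ x u))
  rintro p ⟨a, b, ha, hb, hab, rfl⟩
  have hu : u ∈ convexHull ℝ (W : Set E) := subset_convexHull ℝ _ huW
  refine ⟨(convex_convexHull ℝ _).openSegment_subset hx hu ⟨a, b, ha, hb, hab, rfl⟩, ?_⟩
  intro hp
  obtain ⟨w, hw0, hw1, hwx⟩ := Finset.mem_convexHull'.mp hx
  classical
  -- barycentric coordinates of `a • x + b • u`; the one at `u` is positive, so it is not in
  -- the affine span of `V`
  set w' : E → ℝ := fun y => a * w y + if y = u then b else 0 with hw'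
  have hw'1 : ∑ y ∈ W, w' y = 1 := by
    simp [hw', Finset.sum_add_distrib, ← Finset.mul_sum, hw1, huW, hab]
  have hw'x : ∑ y ∈ W, w' y • y = a • x + b • u := by
    simp [hw', add_smul, Finset.sum_add_distrib, mul_smul, ← Finset.smul_sum, hwx, huW]
  have hzero := hW.weight_eq_zero_of_sum_smul_mem_affineSpan hVW hw'1
    (hw'x ▸ convexHull_subset_affineSpan _ hp) huW huV
  have hpos : 0 < w' u := by
    show 0 < a * w u + if u = u then b else 0
    rw [if_pos rfl]
    nlinarith [hw0 u huW]
  exact hpos.ne' hzero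

end Topology

theorem subset_closure_sdiff_sUnion {X : Type*} [TopologicalSpace X] {A : Set X}
    {F : Set (Set X)} (hF : F.Finite) (hclosed : ∀ f ∈ F, IsClosed f)
    (hdense : ∀ f ∈ F, A ⊆ closure (A \ f)) : A ⊆ closure (A \ ⋃₀ F) := by
  induction F, hF using Set.Finite.induction_on with
  | empty => simpa using subset_closure
  | @insert f F _ _ ih =>
    have hf : A \ f ⊆ closure (A \ ⋃₀ insert f F) := by
      calc A \ f ⊆ fᶜ ∩ closure (A \ ⋃₀ F) :=
            fun x hx => ⟨hx.2, ih (fun g hg => hclosed g (.inr hg))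
              (fun g hg => hdense g (.inr hg)) hx.1⟩
        _ ⊆ closure (fᶜ ∩ (A \ ⋃₀ F)) := (hclosed f (.inl rfl)).isOpen_compl.inter_closure
        _ = closure (A \ ⋃₀ insert f F) := by
            rw [sUnion_insert, ← sdiff_eq_compl_inter, sdiff_sdiff, union_comm]
    exact (hdense f (.inl rfl)).trans (closure_minimal hf isClosed_closure)

section Triangulation
variable {n : ℕ} {K : Set (Set (Fin n → ℝ))}

theorem IsFaceOf.subset {s t : Set (Fin n → ℝ)} (h : IsFaceOf s t) : s ⊆ t := by
  obtain ⟨W, V, -, -, rfl, -, hVW, rfl⟩ := h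
  exact convexHull_mono (Finset.coe_subset.mpr hVW)

theorem IsSimplex.isClosed {s : Set (Fin n → ℝ)} (h : IsSimplex s) : IsClosed s := by
  obtain ⟨V, -, -, rfl⟩ := h
  exact V.finite_toSet.isClosed_convexHull (𝕜 := ℝ)

theorem IsTriangulation.isClosed_sUnion (hK : IsTriangulation K) {S : Set (Set (Fin n → ℝ))}
    (hSK : S ⊆ K) : IsClosed (⋃₀ S) :=
  sUnion_eq_biUnion (s := S) ▸
    (hK.finite.subset hSK).isClosed_biUnion fun s hs => (hK.simplex s (hSK hs)).isClosed

/-- `s` meets `t` in a proper face of `s`, which is nowhere dense in `s`. -/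
theorem IsTriangulation.subset_closure_sdiff (hK : IsTriangulation K)
    {s t : Set (Fin n → ℝ)} (hs : s ∈ K) (ht : t ∈ K) (hst : ¬ s ⊆ t) :
    s ⊆ closure (s \ t) := by
  rcases hK.inter s hs t ht with hempty | ⟨⟨W, V, -, hW, hsW, -, hVW, hstV⟩, -⟩
  · rw [sdiff_eq_left.mpr (disjoint_iff_inter_eq_empty.mpr hempty)]
    exact subset_closure
  · have hVW' : V ≠ W := by
      rintro rfl
      exact hst (hsW ▸ hstV ▸ inter_subset_right)
    rw [← sdiff_self_inter, hstV, hsW]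
    exact hW.convexHull_subset_closure_convexHull_sdiff hVW hVW'

theorem IsTriangulation.subset_closure_sdiff_sUnion (hK : IsTriangulation K)
    {s : Set (Fin n → ℝ)} {T : Set (Set (Fin n → ℝ))} (hs : s ∈ K) (hTK : T ⊆ K)
    (hsT : ¬ s ⊆ ⋃₀ T) : s ⊆ closure (s \ ⋃₀ T) :=
  _root_.subset_closure_sdiff_sUnion (hK.finite.subset hTK)
    (fun t ht => (hK.simplex t (hTK ht)).isClosed)
    fun _ ht => hK.subset_closure_sdiff hs (hTK ht) fun hst =>
      hsT (hst.trans (subset_sUnion_of_mem ht))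

theorem IsTriangulation.closure_sUnion_sdiff_sUnion (hK : IsTriangulation K)
    {S T : Set (Set (Fin n → ℝ))} (hSK : S ⊆ K) (hTK : T ⊆ K) :
    closure (⋃₀ S \ ⋃₀ T) = ⋃₀ {s ∈ S | ¬ s ⊆ ⋃₀ T} := by
  apply Subset.antisymm
  · refine closure_minimal ?_ (hK.isClosed_sUnion fun s hs => hSK hs.1)
    rintro x ⟨⟨s, hs, hxs⟩, hxT⟩
    exact ⟨s, ⟨hs, fun hsT => hxT (hsT hxs)⟩, hxs⟩
  · rintro x ⟨s, ⟨hs, hsT⟩, hxs⟩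
    refine closure_mono ?_ (hK.subset_closure_sdiff_sUnion (hSK hs) hTK hsT hxs)
    exact sdiff_subset_sdiff_left (subset_sUnion_of_mem hs)

/-- The witness is the set of all simplices of `K` contained in `⋃₀ S`. -/
theorem IsTriangulation.sigmaDefinable_sUnion (hK : IsTriangulation K)
    {S : Set (Set (Fin n → ℝ))} (hSK : S ⊆ K) : SigmaDefinable K (⋃₀ S) := by
  refine ⟨{u ∈ K | u ⊆ ⋃₀ S}, fun u hu => hu.1, ?_, ?_⟩
  · exact fun u hu t htu => ⟨hK.face_mem u hu.1 t htu, htu.subset.trans hu.2⟩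
  · refine Subset.antisymm ?_ (sUnion_subset fun u hu => hu.2)
    rintro x ⟨s, hs, hxs⟩
    exact ⟨s, ⟨hSK hs, subset_sUnion_of_mem hs⟩, hxs⟩

end Triangulation

/-- If `C` and `D` are `K`-definable polyhedra of a triangulation `K`,
then the co-Heyting implication `cl (C \ D)` is again a `K`-definable polyhedron;
consequently the `K`-definable polyhedra form a co-Heyting subalgebra of the closed
subsets of `|K|`. -/
theorem definable_coHeyting {n : ℕ} (K : Set (Set (Fin n → ℝ))) (hK : IsTriangulation K)
    (C D : Set (Fin n → ℝ)) (hC : SigmaDefinable K C) (hD : SigmaDefinable K D) :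
    SigmaDefinable K (closure (C \ D)) := by
  obtain ⟨S, hSK, -, rfl⟩ := hC
  obtain ⟨T, hTK, -, rfl⟩ := hD
  rw [hK.closure_sUnion_sdiff_sUnion hSK hTK]
  exact hK.sigmaDefinable_sUnion fun s hs => hSK hs.1
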